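/- Assume α ≠ 0. In the Lie algebra 𝔤 with brackets [x,y] = αy + αz, [y,z] = 2αx, [z,x] = αy + αz and the inner product λ²·(standard inner product on the basis {x,y,z}), a vector w = a·x + b·y + c·z (a,b,c ∈ ℝ) satisfies ∇_v w = 0 for all v ∈ 𝔤 if and only if a = 0 and c = −b; that is, the parallel vectors are exactly the multiples of y − z. -/
import Mathlib


/-- The bracket of the 3-dimensional Lie algebra with basis `x = e₀, y = e₁, z = e₂` and
`[x,y] = αy + αz`, `[y,z] = 2αx`, `[z,x] = αy + αz`. -/
def gBracket (α : ℝ) (u v : Fin 3 → ℝ) : Fin 3 → ℝ :=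
  ![2 * α * (u 1 * v 2 - u 2 * v 1),
    α * ((u 0 * v 1 - u 1 * v 0) + (u 2 * v 0 - u 0 * v 2)),
    α * ((u 0 * v 1 - u 1 * v 0) + (u 2 * v 0 - u 0 * v 2))]

/-- The inner product `λ² · (standard inner product)` in the basis `{x,y,z}`. -/
def inner3 (lam : ℝ) (u v : Fin 3 → ℝ) : ℝ :=
  lam ^ 2 * (u 0 * v 0 + u 1 * v 1 + u 2 * v 2)

theorem gAlg_parallel_iff (α : ℝ) (hα : α ≠ 0) (lam : ℝ) (hlam : 0 < lam)
    -- the Levi-Civita (Koszul) connection of the metric `inner3 lam`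
    (nabla : (Fin 3 → ℝ) → (Fin 3 → ℝ) → (Fin 3 → ℝ))
    (hK : ∀ u v w : Fin 3 → ℝ, 2 * inner3 lam (nabla u v) w =
      inner3 lam (gBracket α u v) w - inner3 lam (gBracket α v w) u
        + inner3 lam (gBracket α w u) v)
    (a b c : ℝ) :
    (∀ v : Fin 3 → ℝ, nabla v ![a, b, c] = 0) ↔ (a = 0 ∧ c = -b) := by
  have hl2 : (lam:ℝ)^2 ≠ 0 := pow_ne_zero 2 (ne_of_gt hlam)
  constructor
  · intro h
    have h1 := hK ![0,1,0] ![a,b,c] ![0,1,0]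
    have h2 := hK ![0,1,0] ![a,b,c] ![1,0,0]
    rw [h ![0,1,0]] at h1 h2
    simp [inner3, gBracket, Matrix.cons_val_zero, Matrix.cons_val_one] at h1 h2
    constructor
    · have ha : lam ^ 2 * (α * a) = 0 := by linear_combination (1/2) * h1
      exact (mul_eq_zero.mp ((mul_eq_zero.mp ha).resolve_left hl2)).resolve_left hα
    · have hbc : lam ^ 2 * (α * (b + c)) = 0 := by linear_combination (-1/2) * h2
      have := (mul_eq_zero.mp ((mul_eq_zero.mp hbc).resolve_left hl2)).resolve_left hα
      linarith
  · rintro ⟨ha, hc⟩ v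
    subst ha hc
    funext j
    have key : ∀ w : Fin 3 → ℝ, 2 * inner3 lam (nabla v ![0, b, -b]) w =
        inner3 lam (gBracket α v ![0,b,-b]) w - inner3 lam (gBracket α ![0,b,-b] w) v
          + inner3 lam (gBracket α w v) ![0,b,-b] := hK v ![0,b,-b]
    fin_cases j
    · have hthis := key ![1,0,0]
      simp [inner3, gBracket] at hthis ⊢
      have hz : 2 * (lam ^ 2 * nabla v ![0, b, -b] 0) = 0 := by linear_combination hthis
      exact (mul_eq_zero.mp ((mul_eq_zero.mp hz).resolve_left two_ne_zero)).resolve_left hl2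
    · have hthis := key ![0,1,0]
      simp [inner3, gBracket] at hthis ⊢
      have hz : 2 * (lam ^ 2 * nabla v ![0, b, -b] 1) = 0 := by linear_combination hthis
      exact (mul_eq_zero.mp ((mul_eq_zero.mp hz).resolve_left two_ne_zero)).resolve_left hl2
    · have hthis := key ![0,0,1]
      simp [inner3, gBracket] at hthis ⊢
      have hz : 2 * (lam ^ 2 * nabla v ![0, b, -b] 2) = 0 := by linear_combination hthis
      exact (mul_eq_zero.mp ((mul_eq_zero.mp hz).resolve_left two_ne_zero)).resolve_left hl2
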